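/- arXiv:2011.03396 — 10 statements merged into one kernel-verified Lean document; each statement's English description precedes it below -/
import Mathlib

section
/- Let S and O be nonempty finite sets with |S| ≥ 2, let C be a channel from S to O, and let π be any prior on S with G(π) > 0. Then β(π, C) ≥ min over distinct pairs a, b ∈ S of β(π_{ab}, C). In other words, the multiplicative Bayes risk leakage over all priors is minimized by a prior of the form π* = (0, …, 0, 1/2, 0, …, 0, 1/2, 0, …, 0) that assigns probability 1/2 to each of two distinct secrets and 0 elsewhere, so β*(C) = min_{π : G(π) > 0} β(π, C). -/
/-- A channel from secrets `S` to outputs `O`: nonnegative entries, rows sum to 1. -/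
def IsChannel {S O : Type*} [Fintype O] (C : S → O → ℝ) : Prop :=
  (∀ s o, 0 ≤ C s o) ∧ ∀ s, ∑ o, C s o = 1

/-- A prior on `S`: nonnegative, sums to 1. -/
def IsPrior {S : Type*} [Fintype S] (π : S → ℝ) : Prop :=
  (∀ s, 0 ≤ π s) ∧ ∑ s, π s = 1

/-- Bayes risk `R*(π, C) = 1 − ∑_o max_s (π s · C s o)`. -/
noncomputable def bayesRisk {S O : Type*} [Fintype S] [Nonempty S] [Fintype O]
    (π : S → ℝ) (C : S → O → ℝ) : ℝ :=
  1 - ∑ o, Finset.univ.sup' Finset.univ_nonempty (fun s => π s * C s o)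

/-- Guessing error `G(π) = 1 − max_s π s`. -/
noncomputable def guessErr {S : Type*} [Fintype S] [Nonempty S] (π : S → ℝ) : ℝ :=
  1 - Finset.univ.sup' Finset.univ_nonempty π

/-- Multiplicative Bayes risk leakage `β(π, C) = R*(π, C) / G(π)`. -/
noncomputable def betaL {S O : Type*} [Fintype S] [Nonempty S] [Fintype O]
    (π : S → ℝ) (C : S → O → ℝ) : ℝ :=
  bayesRisk π C / guessErr π

/-- The prior `π_{ab}` assigning 1/2 to each of `a` and `b` and 0 elsewhere. -/
noncomputable def pairPrior {S : Type*} [DecidableEq S] (a b : S) : S → ℝ :=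
  fun s => if s = a ∨ s = b then 1 / 2 else 0

/-- Bayes security `β*(C)`: the minimum of `β(π_{ab}, C)` over distinct pairs `a ≠ b`. -/
noncomputable def betaStar {S O : Type*} [Fintype S] [Nonempty S] [DecidableEq S] [Fintype O]
    (C : S → O → ℝ) (h : 1 < Fintype.card S) : ℝ :=
  (Finset.univ.filter (fun p : S × S => p.1 ≠ p.2)).inf'
    (by
      obtain ⟨a, b, hab⟩ := Fintype.exists_pair_of_one_lt_card h
      exact ⟨(a, b), by simp [hab]⟩)
    (fun p => betaL (pairPrior p.1 p.2) C)

/-!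
Let `m` be a most likely secret of `π`, so `G(π) = 1 - π m`. For each output `o`, the largest
joint weight `π s · C s o` is at most `π m · C m o` plus the sum over `s ≠ m` of the positive
parts of `π s · C s o - π m · C m o`. Since `π s ≤ π m`, the term of `s` is at most
`π s · (C s o - min (C s o) (C m o))`; summing over `o` bounds it by
`π s · (1 - β(π_{sm}, C))`, because `β(π_{ab}, C) = ∑_o min (C a o) (C b o)`.
Summing over `s ≠ m` gives `1 - R*(π, C) ≤ π m + (1 - π m)(1 - β*(C))`,
that is `G(π) · β*(C) ≤ R*(π, C)`.
-/

open Finset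

lemma Finset.sup'_le_add_sum_max_sub {ι : Type*} [DecidableEq ι] {s : Finset ι}
    (hs : s.Nonempty) (f : ι → ℝ) {m : ι} (hm : m ∈ s) :
    s.sup' hs f ≤ f m + ∑ t ∈ s.erase m, max (f t - f m) 0 := by
  have hnonneg : ∀ t ∈ s.erase m, 0 ≤ max (f t - f m) 0 := fun _ _ => le_max_right _ _
  refine sup'_le hs f fun t ht => ?_
  by_cases htm : t = m
  · subst htm
    linarith [sum_nonneg hnonneg]
  · have hsingle := single_le_sum hnonneg (mem_erase.mpr ⟨htm, ht⟩)
    linarith [le_max_left (f t - f m) 0]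

lemma max_mul_sub_mul_zero_le {x y p q : ℝ} (hx : 0 ≤ x) (hxy : x ≤ y) (hq : 0 ≤ q) :
    max (x * p - y * q) 0 ≤ x * (p - min p q) := by
  rcases le_total p q with hpq | hqp
  · rw [min_eq_left hpq, sub_self, mul_zero]
    exact max_le (by nlinarith) le_rfl
  · rw [min_eq_right hqp]
    exact max_le (by nlinarith) (mul_nonneg hx (sub_nonneg.mpr hqp))

lemma IsChannel.sum_max_mul_sub_mul_zero_le {S O : Type*} [Fintype O] {C : S → O → ℝ}
    (hC : IsChannel C) {x y : ℝ} (hx : 0 ≤ x) (hxy : x ≤ y) (s m : S) :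
    ∑ o, max (x * C s o - y * C m o) 0 ≤ x * (1 - ∑ o, min (C s o) (C m o)) :=
  calc ∑ o, max (x * C s o - y * C m o) 0
      ≤ ∑ o, x * (C s o - min (C s o) (C m o)) :=
        sum_le_sum fun o _ => max_mul_sub_mul_zero_le hx hxy (hC.1 m o)
    _ = x * (1 - ∑ o, min (C s o) (C m o)) := by
        rw [← mul_sum, sum_sub_distrib, hC.2 s]

section
variable {S O : Type*} [Fintype S] [Nonempty S] [DecidableEq S] [Fintype O]

lemma sup'_pairPrior_mul (g : S → ℝ) (hg : ∀ s, 0 ≤ g s) (a b : S) :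
    univ.sup' univ_nonempty (fun s => pairPrior a b s * g s) = max (g a) (g b) / 2 := by
  have hpair : ∀ s, pairPrior a b s * g s ≤ max (g a) (g b) / 2 := fun s => by
    by_cases h : s = a ∨ s = b
    · rcases h with rfl | rfl <;> simp [pairPrior, div_eq_inv_mul]
    · simp only [pairPrior, if_neg h, zero_mul]
      exact div_nonneg ((hg a).trans (le_max_left _ _)) zero_le_two
  refine le_antisymm (sup'_le _ _ fun s _ => hpair s) ?_
  rcases max_choice (g a) (g b) with h | h <;> rw [h]
  · exact (by simp [pairPrior, div_eq_inv_mul] : g a / 2 = _).trans_le (le_sup' _ (mem_univ a))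
  · exact (by simp [pairPrior, div_eq_inv_mul] : g b / 2 = _).trans_le (le_sup' _ (mem_univ b))

lemma guessErr_pairPrior (a b : S) : guessErr (pairPrior a b) = 1 / 2 := by
  have h := sup'_pairPrior_mul (fun _ => (1 : ℝ)) (fun _ => zero_le_one) a b
  simp only [mul_one, max_self] at h
  rw [guessErr, h]
  norm_num

lemma IsChannel.bayesRisk_pairPrior {C : S → O → ℝ} (hC : IsChannel C) (a b : S) :
    bayesRisk (pairPrior a b) C = (∑ o, min (C a o) (C b o)) / 2 := by
  have hmax : ∑ o, max (C a o) (C b o) = 2 - ∑ o, min (C a o) (C b o) := by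
    have hsum := sum_congr rfl fun o (_ : o ∈ univ) => max_add_min (C a o) (C b o)
    rw [sum_add_distrib, sum_add_distrib, hC.2 a, hC.2 b] at hsum
    linarith
  simp only [bayesRisk, sup'_pairPrior_mul (fun s => C s _) (fun s => hC.1 s _), ← sum_div, hmax]
  ring

lemma IsChannel.betaL_pairPrior {C : S → O → ℝ} (hC : IsChannel C) (a b : S) :
    betaL (pairPrior a b) C = ∑ o, min (C a o) (C b o) := by
  rw [betaL, hC.bayesRisk_pairPrior, guessErr_pairPrior]
  ring

theorem IsChannel.guessErr_mul_le_bayesRisk {C : S → O → ℝ} (hC : IsChannel C)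
    {π : S → ℝ} (hπ : IsPrior π) {B : ℝ}
    (hB : ∀ a b, a ≠ b → B ≤ ∑ o, min (C a o) (C b o)) :
    guessErr π * B ≤ bayesRisk π C := by
  obtain ⟨m, -, hm⟩ := exists_mem_eq_sup' univ_nonempty π
  have hπm : ∀ s, π s ≤ π m := fun s => hm ▸ le_sup' π (mem_univ s)
  have hsecret : ∀ s ∈ univ.erase m,
      ∑ o, max (π s * C s o - π m * C m o) 0 ≤ π s * (1 - B) := fun s hs =>
    (hC.sum_max_mul_sub_mul_zero_le (hπ.1 s) (hπm s) s m).trans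
      (mul_le_mul_of_nonneg_left (by linarith [hB s m (ne_of_mem_erase hs)]) (hπ.1 s))
  have hsuccess : ∑ o, univ.sup' univ_nonempty (fun s => π s * C s o)
      ≤ π m + (1 - π m) * (1 - B) :=
    calc ∑ o, univ.sup' univ_nonempty (fun s => π s * C s o)
        ≤ ∑ o, (π m * C m o + ∑ s ∈ univ.erase m, max (π s * C s o - π m * C m o) 0) :=
          sum_le_sum fun o _ => sup'_le_add_sum_max_sub _ (fun s => π s * C s o) (mem_univ m)
      _ = π m + ∑ s ∈ univ.erase m, ∑ o, max (π s * C s o - π m * C m o) 0 := by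
          rw [sum_add_distrib, ← mul_sum, hC.2 m, mul_one, sum_comm]
      _ ≤ π m + ∑ s ∈ univ.erase m, π s * (1 - B) := by gcongr with s hs; exact hsecret s hs
      _ = π m + (1 - π m) * (1 - B) := by
          rw [← sum_mul, sum_erase_eq_sub (mem_univ m), hπ.2]
  rw [guessErr, bayesRisk, hm]
  linarith

lemma betaStar_le_betaL_pairPrior (C : S → O → ℝ) (hS : 1 < Fintype.card S) {a b : S}
    (hab : a ≠ b) : betaStar C hS ≤ betaL (pairPrior a b) C := by
  have hmem : (a, b) ∈ univ.filter (fun p : S × S => p.1 ≠ p.2) := by simpa using hab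
  exact inf'_le _ hmem

end

theorem betaStar_le_betaL_general {S O : Type*} [Fintype S] [Nonempty S] [DecidableEq S]
    [Fintype O] (hS : 1 < Fintype.card S)
    (C : S → O → ℝ) (hC : IsChannel C)
    (π : S → ℝ) (hπ : IsPrior π) (hG : 0 < guessErr π) :
    betaStar C hS ≤ betaL π C := by
  have hpair : ∀ a b, a ≠ b → betaStar C hS ≤ ∑ o, min (C a o) (C b o) := fun a b hab =>
    hC.betaL_pairPrior a b ▸ betaStar_le_betaL_pairPrior C hS hab
  rw [betaL, le_div_iff₀ hG, mul_comm]
  exact hC.guessErr_mul_le_bayesRisk hπ hpair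

/-- `β(π, C)` is minimized over all priors with positive guessing error by a
prior of the form `π_{ab}` (uniform on two distinct secrets), i.e. `β*(C) ≤ β(π, C)`. -/
theorem betaStar_le_betaL {S O : Type*} [Fintype S] [Nonempty S] [DecidableEq S]
    [Fintype O] [Nonempty O] (hS : 1 < Fintype.card S)
    (C : S → O → ℝ) (hC : IsChannel C)
    (π : S → ℝ) (hπ : IsPrior π) (hG : 0 < guessErr π) :
    betaStar C hS ≤ betaL π C :=
  betaStar_le_betaL_general hS C hC π hπ hG
end

section
/- Let S and O be nonempty finite sets with |S| ≥ 2 and let C be a channel from S to O. Then β*(C) = 1 − (1/2) · max_{a, b ∈ S} ∑_{o ∈ O} |C a o − C b o| = 1 − max_{a, b ∈ S} tv(C_a, C_b); that is, the Bayes security metric equals one minus the maximal total variation distance between two rows of the channel. -/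
/-- Total variation distance between two distributions on a finite set. -/
noncomputable def tvDist {O : Type*} [Fintype O] (p q : O → ℝ) : ℝ :=
  (1 / 2) * ∑ o, |p o - q o|

lemma betaL_pair {S O : Type*} [Fintype S] [Nonempty S] [DecidableEq S] [Fintype O]
    (C : S → O → ℝ) (hC : IsChannel C) {a b : S} (hab : a ≠ b) :
    betaL (pairPrior a b) C = 1 - (1/2) * ∑ o, |C a o - C b o| := by
  have hπa : pairPrior a b a = 1/2 := by simp [pairPrior]
  have hπb : pairPrior a b b = 1/2 := by simp [pairPrior]
  have hG : guessErr (pairPrior a b) = 1/2 := by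
    unfold guessErr
    have h1 : Finset.univ.sup' Finset.univ_nonempty (pairPrior a b) = 1/2 := by
      apply le_antisymm
      · apply Finset.sup'_le
        intro s _
        by_cases h : s = a ∨ s = b <;> simp [pairPrior, h]
      · calc (1:ℝ)/2 = pairPrior a b a := hπa.symm
          _ ≤ _ := Finset.le_sup' _ (Finset.mem_univ a)
    rw [h1]; norm_num
  have hsup : ∀ o, Finset.univ.sup' Finset.univ_nonempty (fun s => pairPrior a b s * C s o)
      = (C a o + C b o + |C a o - C b o|) / 4 := by
    intro o
    have hmax : max (1/2 * C a o) (1/2 * C b o)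
        = (C a o + C b o + |C a o - C b o|) / 4 := by
      rcases le_total (C a o) (C b o) with h | h
      · rw [max_eq_right (by linarith), abs_of_nonpos (by linarith)]; ring
      · rw [max_eq_left (by linarith), abs_of_nonneg (by linarith)]; ring
    rw [← hmax]
    apply le_antisymm
    · apply Finset.sup'_le
      intro s _
      by_cases hs : s = a ∨ s = b
      · rcases hs with rfl | rfl
        · rw [hπa]; exact le_max_left _ _
        · rw [hπb]; exact le_max_right _ _
      · have h0 : pairPrior a b s = 0 := by simp [pairPrior, hs]
        rw [h0, zero_mul]
        exact le_max_of_le_left (by have := hC.1 a o; linarith)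
    · apply max_le
      · have := Finset.le_sup' (fun s => pairPrior a b s * C s o) (Finset.mem_univ a)
        rw [hπa] at this; exact this
      · have := Finset.le_sup' (fun s => pairPrior a b s * C s o) (Finset.mem_univ b)
        rw [hπb] at this; exact this
  have hR : bayesRisk (pairPrior a b) C = 1/2 - (1/4) * ∑ o, |C a o - C b o| := by
    unfold bayesRisk
    rw [Finset.sum_congr rfl (fun o _ => hsup o)]
    have hsum : ∑ o, (C a o + C b o + |C a o - C b o|) / 4
        = (∑ o, C a o + ∑ o, C b o + ∑ o, |C a o - C b o|) / 4 := by
      rw [← Finset.sum_div, Finset.sum_add_distrib, Finset.sum_add_distrib]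
    rw [hsum, hC.2 a, hC.2 b]; ring
  unfold betaL
  rw [hR, hG]; ring

set_option maxHeartbeats 1000000 in
/-- `β*(C) = 1 − (1/2) max_{a,b} ∑_o |C a o − C b o| = 1 − max_{a,b} tv(C_a, C_b)`. -/
theorem betaStar_eq_one_sub_max_tv {S O : Type*} [Fintype S] [Nonempty S] [DecidableEq S]
    [Fintype O] [Nonempty O]
    (hS : 1 < Fintype.card S) (C : S → O → ℝ) (hC : IsChannel C) :
    betaStar C hS = 1 - (1 / 2) *
        (Finset.univ : Finset (S × S)).sup' Finset.univ_nonempty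
          (fun p => ∑ o, |C p.1 o - C p.2 o|) ∧
    betaStar C hS = 1 -
        (Finset.univ : Finset (S × S)).sup' Finset.univ_nonempty
          (fun p => tvDist (C p.1) (C p.2)) := by
  set f : S × S → ℝ := fun p => ∑ o, |C p.1 o - C p.2 o| with hf
  have hf0 : ∀ p, 0 ≤ f p := fun p => Finset.sum_nonneg fun o _ => abs_nonneg _
  obtain ⟨a0, b0, hab0⟩ := Fintype.exists_pair_of_one_lt_card hS
  set M := (Finset.univ : Finset (S × S)).sup' Finset.univ_nonempty f with hM
  have key : betaStar C hS = 1 - (1/2) * M := by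
    unfold betaStar
    apply le_antisymm
    · obtain ⟨p0, _, hp0⟩ := Finset.exists_mem_eq_sup' (Finset.univ_nonempty (α := S × S)) f
      by_cases hd : p0.1 = p0.2
      · have hM0 : M = 0 := by rw [hM, hp0]; simp [hf, hd]
        have hle : f (a0, b0) ≤ M := Finset.le_sup' f (Finset.mem_univ _)
        have hfe : f (a0, b0) = 0 := le_antisymm (hM0 ▸ hle) (hf0 _)
        calc _ ≤ betaL (pairPrior a0 b0) C :=
              Finset.inf'_le (s := Finset.univ.filter (fun p : S × S => p.1 ≠ p.2))
                (f := fun p : S × S => betaL (pairPrior p.1 p.2) C) (b := (a0, b0)) (by simp [hab0])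
          _ = 1 - (1/2) * f (a0, b0) := betaL_pair C hC hab0
          _ = 1 - (1/2) * M := by rw [hfe, hM0]
      · calc _ ≤ betaL (pairPrior p0.1 p0.2) C :=
              Finset.inf'_le (s := Finset.univ.filter (fun p : S × S => p.1 ≠ p.2))
                (f := fun p : S × S => betaL (pairPrior p.1 p.2) C) (b := p0) (by simp [hd])
          _ = 1 - (1/2) * f p0 := betaL_pair C hC hd
          _ = 1 - (1/2) * M := by rw [hM, hp0]
    · apply Finset.le_inf'
      intro p hp
      have hd : p.1 ≠ p.2 := (Finset.mem_filter.mp hp).2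
      rw [betaL_pair C hC hd]
      have : f p ≤ M := Finset.le_sup' f (Finset.mem_univ p)
      linarith
  refine ⟨key, ?_⟩
  have htv : (Finset.univ : Finset (S × S)).sup' Finset.univ_nonempty
      (fun p => tvDist (C p.1) (C p.2)) = (1/2) * M := by
    apply le_antisymm
    · apply Finset.sup'_le
      intro p _
      have : f p ≤ M := Finset.le_sup' f (Finset.mem_univ p)
      unfold tvDist
      have : (1/2) * f p ≤ (1/2) * M := by linarith
      simpa [hf] using this
    · obtain ⟨p0, _, hp0⟩ := Finset.exists_mem_eq_sup' (Finset.univ_nonempty (α := S × S)) f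
      have h1 : (1/2) * M = tvDist (C p0.1) (C p0.2) := by
        rw [hM, hp0]; simp [tvDist, hf]
      rw [h1]
      exact Finset.le_sup' (fun p => tvDist (C p.1) (C p.2)) (Finset.mem_univ p0)
  rw [htv, key]
end

section
/- Let S, T, O be nonempty finite sets with |S| ≥ 2 and |T| ≥ 2, let C¹ be a channel from S to T and C² a channel from T to O, and let C¹C² be their cascade composition. Then β*(C¹C²) ≥ max(β*(C¹), β*(C²)); that is, neither pre-processing nor post-processing decreases Bayes security. -/
/-- Cascade composition of channels: the output of `C₁` is fed into `C₂`. -/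
noncomputable def cascade {S T O : Type*} [Fintype T] (C₁ : S → T → ℝ) (C₂ : T → O → ℝ) :
    S → O → ℝ :=
  fun s o => ∑ t, C₁ s t * C₂ t o

section Aux

open Finset

lemma betaL_pair_eq {S O : Type*} [Fintype S] [Nonempty S] [DecidableEq S] [Fintype O]
    (a b : S) (C : S → O → ℝ) (hC : IsChannel C) :
    betaL (pairPrior a b) C = 1 - (∑ o, |C a o - C b o|) / 2 := by
  have hpa : pairPrior a b a = 1 / 2 := by simp [pairPrior]
  have hple : ∀ s, pairPrior a b s ≤ 1 / 2 := by
    intro s; unfold pairPrior; split_ifs <;> norm_num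
  have hsup : Finset.univ.sup' Finset.univ_nonempty (pairPrior a b) = 1 / 2 := by
    apply le_antisymm
    · exact Finset.sup'_le _ _ fun s _ => hple s
    · exact hpa ▸ Finset.le_sup' (pairPrior a b) (Finset.mem_univ a)
  have hge : guessErr (pairPrior a b) = 1 / 2 := by
    unfold guessErr; rw [hsup]; norm_num
  have hsupo : ∀ o, Finset.univ.sup' Finset.univ_nonempty (fun s => pairPrior a b s * C s o)
      = max (C a o / 2) (C b o / 2) := by
    intro o
    apply le_antisymm
    · apply Finset.sup'_le
      intro s _
      rcases Classical.em (s = a ∨ s = b) with hs | hs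
      · have h12 : pairPrior a b s = 1 / 2 := by simp [pairPrior, hs]
        rw [h12]
        rcases hs with h | h <;> subst h
        · exact le_max_of_le_left (by linarith)
        · exact le_max_of_le_right (by linarith)
      · have h0 : pairPrior a b s = 0 := by simp [pairPrior, hs]
        rw [h0, zero_mul]
        exact le_max_of_le_left (by linarith [hC.1 a o])
    · apply max_le
      · have := Finset.le_sup' (fun s => pairPrior a b s * C s o) (Finset.mem_univ a)
        rw [hpa] at this; linarith
      · have hpb : pairPrior a b b = 1 / 2 := by simp [pairPrior]
        have := Finset.le_sup' (fun s => pairPrior a b s * C s o) (Finset.mem_univ b)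
        rw [hpb] at this; linarith
  have hmax : ∀ o, max (C a o / 2) (C b o / 2) = (C a o + C b o + |C a o - C b o|) / 4 := by
    intro o
    rcases le_total (C a o) (C b o) with h | h
    · rw [max_eq_right (by linarith), abs_of_nonpos (by linarith)]; ring
    · rw [max_eq_left (by linarith), abs_of_nonneg (by linarith)]; ring
  have hbr : bayesRisk (pairPrior a b) C = 1 / 2 - (∑ o, |C a o - C b o|) / 4 := by
    unfold bayesRisk
    rw [Finset.sum_congr rfl fun o _ => (hsupo o).trans (hmax o)]
    have h1 : ∑ o, (C a o + C b o + |C a o - C b o|) / 4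
        = ((∑ o, C a o) + (∑ o, C b o) + ∑ o, |C a o - C b o|) / 4 := by
      rw [← Finset.sum_div, Finset.sum_add_distrib, Finset.sum_add_distrib]
    rw [h1, hC.2 a, hC.2 b]; ring
  unfold betaL
  rw [hbr, hge]; ring

lemma cascade_isChannel {S T O : Type*} [Fintype T] [Fintype O]
    {C₁ : S → T → ℝ} (hC₁ : IsChannel C₁) {C₂ : T → O → ℝ} (hC₂ : IsChannel C₂) :
    IsChannel (cascade C₁ C₂) := by
  constructor
  · intro s o
    exact Finset.sum_nonneg fun t _ => mul_nonneg (hC₁.1 s t) (hC₂.1 t o)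
  · intro s
    unfold cascade
    rw [Finset.sum_comm]
    calc ∑ t, ∑ o, C₁ s t * C₂ t o = ∑ t, C₁ s t * ∑ o, C₂ t o := by
          exact Finset.sum_congr rfl fun t _ => (Finset.mul_sum _ _ _).symm
      _ = 1 := by simp only [hC₂.2]; simpa using hC₁.2 s

lemma cascade_tv_le₁ {S T O : Type*} [Fintype T] [Fintype O]
    {C₁ : S → T → ℝ} {C₂ : T → O → ℝ} (hC₂ : IsChannel C₂) (a b : S) :
    ∑ o, |cascade C₁ C₂ a o - cascade C₁ C₂ b o| ≤ ∑ t, |C₁ a t - C₁ b t| := by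
  have key : ∀ o, |cascade C₁ C₂ a o - cascade C₁ C₂ b o|
      ≤ ∑ t, |C₁ a t - C₁ b t| * C₂ t o := by
    intro o
    have : cascade C₁ C₂ a o - cascade C₁ C₂ b o = ∑ t, (C₁ a t - C₁ b t) * C₂ t o := by
      unfold cascade; rw [← Finset.sum_sub_distrib]
      exact Finset.sum_congr rfl fun t _ => by ring
    rw [this]
    calc |∑ t, (C₁ a t - C₁ b t) * C₂ t o| ≤ ∑ t, |(C₁ a t - C₁ b t) * C₂ t o| :=
          Finset.abs_sum_le_sum_abs _ _
      _ = ∑ t, |C₁ a t - C₁ b t| * C₂ t o := by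
          exact Finset.sum_congr rfl fun t _ => by
            rw [abs_mul, abs_of_nonneg (hC₂.1 t o)]
  calc ∑ o, |cascade C₁ C₂ a o - cascade C₁ C₂ b o|
      ≤ ∑ o, ∑ t, |C₁ a t - C₁ b t| * C₂ t o := Finset.sum_le_sum fun o _ => key o
    _ = ∑ t, |C₁ a t - C₁ b t| * ∑ o, C₂ t o := by
        rw [Finset.sum_comm]
        exact Finset.sum_congr rfl fun t _ => (Finset.mul_sum _ _ _).symm
    _ = ∑ t, |C₁ a t - C₁ b t| := by simp [hC₂.2]

lemma cascade_tv_le₂ {S T O : Type*} [Fintype T] [Nonempty T] [DecidableEq T] [Fintype O]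
    (hT : 1 < Fintype.card T)
    {C₁ : S → T → ℝ} (hC₁ : IsChannel C₁) {C₂ : T → O → ℝ} (hC₂ : IsChannel C₂) (a b : S) :
    ∃ t t' : T, t ≠ t' ∧
      ∑ o, |cascade C₁ C₂ a o - cascade C₁ C₂ b o| ≤ ∑ o, |C₂ t o - C₂ t' o| := by
  have hne : (Finset.univ.filter (fun p : T × T => p.1 ≠ p.2)).Nonempty := by
    obtain ⟨x, y, hxy⟩ := Fintype.exists_pair_of_one_lt_card hT
    exact ⟨(x, y), by simp [hxy]⟩
  obtain ⟨pm, hpm, hMeq⟩ :=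
    Finset.exists_mem_eq_sup' hne (fun p : T × T => ∑ o, |C₂ p.1 o - C₂ p.2 o|)
  set M := (Finset.univ.filter (fun p : T × T => p.1 ≠ p.2)).sup' hne
      (fun p : T × T => ∑ o, |C₂ p.1 o - C₂ p.2 o|) with hM
  refine ⟨pm.1, pm.2, (Finset.mem_filter.mp hpm).2, ?_⟩
  rw [← hMeq]
  -- now show D_casc ≤ M
  set r : T → ℝ := fun t => C₁ a t - C₁ b t with hr
  set p : T → ℝ := fun t => max (r t) 0 with hp
  set q : T → ℝ := fun t => max (-r t) 0 with hq
  have hpq : ∀ t, p t - q t = r t := by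
    intro t; rcases le_total (r t) 0 with h | h
    · simp [hp, hq, max_eq_right h, max_eq_left (by linarith : (0:ℝ) ≤ -r t)]
    · simp [hp, hq, max_eq_left h, max_eq_right (by linarith : -r t ≤ (0:ℝ))]
  have hpq0 : ∀ t, p t * q t = 0 := by
    intro t; rcases le_total (r t) 0 with h | h
    · simp [hp, max_eq_right h]
    · simp [hq, max_eq_right (by linarith : -r t ≤ (0:ℝ))]
  have hp0 : ∀ t, 0 ≤ p t := fun t => le_max_right _ _
  have hq0 : ∀ t, 0 ≤ q t := fun t => le_max_right _ _
  have hrsum : ∑ t, r t = 0 := by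
    simp only [hr]; rw [Finset.sum_sub_distrib, hC₁.2 a, hC₁.2 b]; ring
  set m : ℝ := ∑ t, p t with hm
  have hqsum : ∑ t, q t = m := by
    have : ∑ t, (p t - q t) = 0 := by
      rw [Finset.sum_congr rfl fun t _ => hpq t]; exact hrsum
    rw [Finset.sum_sub_distrib] at this; linarith
  have hm0 : 0 ≤ m := Finset.sum_nonneg fun t _ => hp0 t
  have hm1 : m ≤ 1 := by
    have : ∀ t, p t ≤ C₁ a t := by
      intro t; apply max_le
      · simp only [hr]; linarith [hC₁.1 b t]
      · exact hC₁.1 a t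
    calc m ≤ ∑ t, C₁ a t := Finset.sum_le_sum fun t _ => this t
      _ = 1 := hC₁.2 a
  have hM0 : 0 ≤ M := by
    rw [hMeq]
    exact Finset.sum_nonneg fun o _ => abs_nonneg _
  have hdiff : ∀ o, cascade C₁ C₂ a o - cascade C₁ C₂ b o = ∑ t, r t * C₂ t o := by
    intro o; unfold cascade; rw [← Finset.sum_sub_distrib]
    exact Finset.sum_congr rfl fun t _ => by simp only [hr]; ring
  rcases eq_or_lt_of_le hm0 with hmz | hmpos
  · -- m = 0, so r = 0
    have hp00 : ∀ t, p t = 0 := by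
      intro t
      have := (Finset.sum_eq_zero_iff_of_nonneg (fun t _ => hp0 t)).mp hmz.symm
      exact this t (Finset.mem_univ t)
    have hq00 : ∀ t, q t = 0 := by
      intro t
      have h0 : ∑ t, q t = 0 := by rw [hqsum, ← hmz]
      exact (Finset.sum_eq_zero_iff_of_nonneg (fun t _ => hq0 t)).mp h0 t (Finset.mem_univ t)
    have hr0 : ∀ t, r t = 0 := fun t => by rw [← hpq t, hp00 t, hq00 t]; ring
    have : ∑ o, |cascade C₁ C₂ a o - cascade C₁ C₂ b o| = 0 := by
      apply Finset.sum_eq_zero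
      intro o _
      rw [hdiff o, Finset.sum_eq_zero fun t _ => by rw [hr0 t, zero_mul], abs_zero]
    rw [this]; exact hM0
  · -- m > 0
    have key : ∀ o, m * (∑ t, r t * C₂ t o)
        = ∑ t, ∑ t', p t * q t' * (C₂ t o - C₂ t' o) := by
      intro o
      have e1 : ∑ t, ∑ t', p t * q t' * C₂ t o
          = (∑ t, p t * C₂ t o) * (∑ t', q t') := by
        rw [Finset.sum_mul]
        refine Finset.sum_congr rfl fun t _ => ?_
        rw [Finset.mul_sum]
        exact Finset.sum_congr rfl fun t' _ => by ring
      have e2 : ∑ t, ∑ t', p t * q t' * C₂ t' o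
          = (∑ t, p t) * (∑ t', q t' * C₂ t' o) := by
        rw [Finset.sum_comm, Finset.mul_sum]
        refine Finset.sum_congr rfl fun t' _ => ?_
        rw [Finset.sum_mul]
        exact Finset.sum_congr rfl fun t _ => by ring
      have e3 : ∑ t, ∑ t', p t * q t' * (C₂ t o - C₂ t' o)
          = (∑ t, p t * C₂ t o) * (∑ t', q t') - (∑ t, p t) * (∑ t', q t' * C₂ t' o) := by
        rw [← e1, ← e2, ← Finset.sum_sub_distrib]
        refine Finset.sum_congr rfl fun t _ => ?_
        rw [← Finset.sum_sub_distrib]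
        exact Finset.sum_congr rfl fun t' _ => by ring
      rw [e3, hqsum, ← hm]
      have e4 : ∑ t, r t * C₂ t o = (∑ t, p t * C₂ t o) - (∑ t, q t * C₂ t o) := by
        rw [← Finset.sum_sub_distrib]
        refine Finset.sum_congr rfl fun t _ => ?_
        rw [← hpq t]; ring
      rw [e4]; ring
    have bound : m * (∑ o, |cascade C₁ C₂ a o - cascade C₁ C₂ b o|) ≤ m * (m * M) := by
      have step : ∀ o, m * |cascade C₁ C₂ a o - cascade C₁ C₂ b o|
          ≤ ∑ t, ∑ t', p t * q t' * |C₂ t o - C₂ t' o| := by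
        intro o
        rw [hdiff o]
        have habs : m * |∑ t, r t * C₂ t o| = |m * ∑ t, r t * C₂ t o| := by
          rw [abs_mul, abs_of_nonneg hm0]
        rw [habs, key o]
        calc |∑ t, ∑ t', p t * q t' * (C₂ t o - C₂ t' o)|
            ≤ ∑ t, |∑ t', p t * q t' * (C₂ t o - C₂ t' o)| := Finset.abs_sum_le_sum_abs _ _
          _ ≤ ∑ t, ∑ t', |p t * q t' * (C₂ t o - C₂ t' o)| :=
              Finset.sum_le_sum fun t _ => Finset.abs_sum_le_sum_abs _ _
          _ = ∑ t, ∑ t', p t * q t' * |C₂ t o - C₂ t' o| := by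
              refine Finset.sum_congr rfl fun t _ => Finset.sum_congr rfl fun t' _ => ?_
              rw [abs_mul, abs_mul, abs_of_nonneg (hp0 t), abs_of_nonneg (hq0 t')]
      calc m * (∑ o, |cascade C₁ C₂ a o - cascade C₁ C₂ b o|)
          = ∑ o, m * |cascade C₁ C₂ a o - cascade C₁ C₂ b o| := Finset.mul_sum _ _ _
        _ ≤ ∑ o, ∑ t, ∑ t', p t * q t' * |C₂ t o - C₂ t' o| :=
            Finset.sum_le_sum fun o _ => step o
        _ = ∑ t, ∑ t', p t * q t' * ∑ o, |C₂ t o - C₂ t' o| := by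
            rw [Finset.sum_comm]
            refine Finset.sum_congr rfl fun t _ => ?_
            rw [Finset.sum_comm]
            refine Finset.sum_congr rfl fun t' _ => ?_
            rw [Finset.mul_sum]
        _ ≤ ∑ t, ∑ t', p t * q t' * M := by
            refine Finset.sum_le_sum fun t _ => Finset.sum_le_sum fun t' _ => ?_
            rcases eq_or_ne t t' with h | h
            · subst h; rw [hpq0 t, zero_mul, zero_mul]
            · have hle' : ∑ o, |C₂ t o - C₂ t' o| ≤ M := by
                rw [hM]
                exact Finset.le_sup' (fun pr : T × T => ∑ o, |C₂ pr.1 o - C₂ pr.2 o|)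
                  (Finset.mem_filter.mpr ⟨Finset.mem_univ (t, t'), h⟩)
              exact mul_le_mul_of_nonneg_left hle' (mul_nonneg (hp0 t) (hq0 t'))
        _ = m * (m * M) := by
            have hrow : ∀ t, ∑ t', p t * q t' * M = p t * ((∑ t', q t') * M) := by
              intro t
              rw [Finset.sum_mul, Finset.mul_sum]
              exact Finset.sum_congr rfl fun t' _ => by ring
            rw [Finset.sum_congr rfl fun t _ => hrow t, ← Finset.sum_mul, hqsum, ← hm]
    have h1 : ∑ o, |cascade C₁ C₂ a o - cascade C₁ C₂ b o| ≤ m * M :=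
      le_of_mul_le_mul_left bound hmpos
    have h2 : m * M ≤ M := by nlinarith
    linarith

end Aux

/-- `β*(C¹C²) ≥ max(β*(C¹), β*(C²))`. -/
theorem betaStar_cascade {S T O : Type*} [Fintype S] [Nonempty S] [DecidableEq S]
    [Fintype T] [Nonempty T] [DecidableEq T] [Fintype O] [Nonempty O]
    (hS : 1 < Fintype.card S) (hT : 1 < Fintype.card T)
    (C₁ : S → T → ℝ) (hC₁ : IsChannel C₁) (C₂ : T → O → ℝ) (hC₂ : IsChannel C₂) :
    max (betaStar C₁ hS) (betaStar C₂ hT) ≤ betaStar (cascade C₁ C₂) hS := by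
  have hcasc := cascade_isChannel hC₁ hC₂
  rw [max_le_iff]
  constructor
  · show betaStar C₁ hS ≤ betaStar (cascade C₁ C₂) hS
    unfold betaStar
    apply Finset.le_inf'
    intro pr hpr
    rw [betaL_pair_eq pr.1 pr.2 _ hcasc]
    have h1 := cascade_tv_le₁ (C₁ := C₁) hC₂ pr.1 pr.2
    have h2 : (Finset.univ.filter (fun p : S × S => p.1 ≠ p.2)).inf'
        (by obtain ⟨a, b, hab⟩ := Fintype.exists_pair_of_one_lt_card hS
            exact ⟨(a, b), by simp [hab]⟩)
        (fun p => betaL (pairPrior p.1 p.2) C₁)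
        ≤ betaL (pairPrior pr.1 pr.2) C₁ := Finset.inf'_le _ hpr
    rw [betaL_pair_eq pr.1 pr.2 _ hC₁] at h2
    linarith
  · show betaStar C₂ hT ≤ betaStar (cascade C₁ C₂) hS
    unfold betaStar
    apply Finset.le_inf'
    intro pr hpr
    rw [betaL_pair_eq pr.1 pr.2 _ hcasc]
    obtain ⟨t, t', htt, hle⟩ := cascade_tv_le₂ hT hC₁ hC₂ pr.1 pr.2
    have h2 : (Finset.univ.filter (fun p : T × T => p.1 ≠ p.2)).inf'
        (by obtain ⟨a, b, hab⟩ := Fintype.exists_pair_of_one_lt_card hT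
            exact ⟨(a, b), by simp [hab]⟩)
        (fun p => betaL (pairPrior p.1 p.2) C₂)
        ≤ betaL (pairPrior t t') C₂ :=
      Finset.inf'_le _ (Finset.mem_filter.mpr ⟨Finset.mem_univ (t, t'), htt⟩)
    rw [betaL_pair_eq t t' _ hC₂] at h2
    linarith
end

section
/- Let S and O be nonempty finite sets with |S| ≥ 2, let C be a channel from S to O, let q : O → ℝ be any probability distribution on O (q o ≥ 0 and ∑_{o ∈ O} q o = 1), and set d = max_{s ∈ S} ∑_{o ∈ O} |C s o − q o|. Then 1 − d ≤ β*(C). Moreover, if q lies in the convex hull of the set of rows {C_s : s ∈ S} ⊆ ℝ^O, then β*(C) ≤ 1 − d/2. -/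
open Finset

lemma pair_guess {S : Type*} [Fintype S] [Nonempty S] [DecidableEq S] (a b : S) :
    guessErr (pairPrior a b) = 1 / 2 := by
  unfold guessErr
  have h : Finset.univ.sup' Finset.univ_nonempty (pairPrior a b) = 1 / 2 := by
    apply le_antisymm
    · apply Finset.sup'_le
      intro s _
      unfold pairPrior
      split <;> norm_num
    · have := Finset.le_sup' (pairPrior a b) (Finset.mem_univ a)
      exact le_trans (by simp [pairPrior]) this
  rw [h]; norm_num

lemma pair_beta {S O : Type*} [Fintype S] [Nonempty S] [DecidableEq S] [Fintype O]
    {a b : S} (hab : a ≠ b) {C : S → O → ℝ} (hC : IsChannel C) :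
    betaL (pairPrior a b) C = 1 - (∑ o, |C a o - C b o|) / 2 := by
  have hsup : ∀ o, Finset.univ.sup' Finset.univ_nonempty (fun s => pairPrior a b s * C s o)
      = (C a o + C b o + |C a o - C b o|) / 4 := by
    intro o
    have hmax : (C a o + C b o + |C a o - C b o|) / 4
        = max (1 / 2 * C a o) (1 / 2 * C b o) := by
      rcases le_total (C a o) (C b o) with h | h
      · rw [max_eq_right (by linarith), abs_of_nonpos (by linarith)]; ring
      · rw [max_eq_left (by linarith), abs_of_nonneg (by linarith)]; ring
    rw [hmax]
    apply le_antisymm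
    · apply Finset.sup'_le
      intro s _
      unfold pairPrior
      rcases eq_or_ne s a with rfl | hsa
      · simp only [true_or, if_pos]
        exact le_max_left _ _
      · rcases eq_or_ne s b with rfl | hsb
        · simp only [or_true, if_pos]
          exact le_max_right _ _
        · simp only [hsa, hsb, or_self, if_neg, not_false_iff, zero_mul]
          have h1 : 0 ≤ 1 / 2 * C a o := by have := hC.1 a o; linarith
          exact le_trans h1 (le_max_left _ _)
    · apply max_le
      · have := Finset.le_sup' (fun s => pairPrior a b s * C s o) (Finset.mem_univ a)
        exact le_trans (by simp [pairPrior]) this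
      · have := Finset.le_sup' (fun s => pairPrior a b s * C s o) (Finset.mem_univ b)
        exact le_trans (by simp [pairPrior]) this
  unfold betaL bayesRisk
  rw [pair_guess a b]
  rw [Finset.sum_congr rfl (fun o _ => hsup o)]
  have hsum : ∑ o, (C a o + C b o + |C a o - C b o|) / 4
      = (1 + 1 + ∑ o, |C a o - C b o|) / 4 := by
    rw [← Finset.sum_div]
    rw [Finset.sum_add_distrib, Finset.sum_add_distrib, hC.2 a, hC.2 b]
  rw [hsum]
  field_simp
  ring
/-- for a distribution `q` on outputs and `d = max_s ‖C_s − q‖₁`, one has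
`1 − d ≤ β*(C)`, and if `q` lies in the convex hull of the rows of `C`, then
`β*(C) ≤ 1 − d/2`. -/
theorem betaStar_approx {S O : Type*} [Fintype S] [Nonempty S] [DecidableEq S]
    [Fintype O] [Nonempty O]
    (hS : 1 < Fintype.card S) (C : S → O → ℝ) (hC : IsChannel C)
    (q : O → ℝ) (hq0 : ∀ o, 0 ≤ q o) (hq1 : ∑ o, q o = 1)
    (d : ℝ)
    (hd : d = Finset.univ.sup' Finset.univ_nonempty (fun s => ∑ o, |C s o - q o|)) :
    1 - d ≤ betaStar C hS ∧
      (q ∈ convexHull ℝ (Set.range fun s => C s) → betaStar C hS ≤ 1 - d / 2) := by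
  constructor
  · apply Finset.le_inf'
    intro p hp
    rw [Finset.mem_filter] at hp
    rw [pair_beta hp.2 hC]
    have h1 : ∑ o, |C p.1 o - q o| ≤ d := by rw [hd]; exact Finset.le_sup' (fun s => ∑ o, |C s o - q o|) (Finset.mem_univ p.1)
    have h2 : ∑ o, |C p.2 o - q o| ≤ d := by rw [hd]; exact Finset.le_sup' (fun s => ∑ o, |C s o - q o|) (Finset.mem_univ p.2)
    have hD : ∑ o, |C p.1 o - C p.2 o| ≤ d + d := by
      calc ∑ o, |C p.1 o - C p.2 o|
          ≤ ∑ o, (|C p.1 o - q o| + |C p.2 o - q o|) := by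
            apply Finset.sum_le_sum
            intro o _
            calc |C p.1 o - C p.2 o| ≤ |C p.1 o - q o| + |q o - C p.2 o| := abs_sub_le _ _ _
              _ = |C p.1 o - q o| + |C p.2 o - q o| := by rw [abs_sub_comm (q o)]
        _ = (∑ o, |C p.1 o - q o|) + ∑ o, |C p.2 o - q o| := Finset.sum_add_distrib
        _ ≤ d + d := add_le_add h1 h2
    linarith
  · intro hq
    obtain ⟨ι, _, w, z, hw0, hw1, hz, hzsum⟩ := mem_convexHull_iff_exists_fintype.1 hq
    obtain ⟨a, -, ha⟩ := Finset.exists_mem_eq_sup' (Finset.univ_nonempty (α := S))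
      (fun s => ∑ o, |C s o - q o|)
    obtain ⟨b, -, hb⟩ := Finset.exists_mem_eq_sup' (Finset.univ_nonempty (α := S))
      (fun s => ∑ o, |C a o - C s o|)
    set M := Finset.univ.sup' Finset.univ_nonempty (fun s => ∑ o, |C a o - C s o|) with hM
    have hdM : d ≤ M := by
      rw [hd, ha]
      have key : ∀ o, |C a o - q o| ≤ ∑ i, w i * |C a o - z i o| := by
        intro o
        have hq' : q o = ∑ i, w i * z i o := by
          rw [← hzsum]
          simp [Finset.sum_apply]
        have h1 : C a o - q o = ∑ i, w i * (C a o - z i o) := by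
          have : ∑ i, w i * (C a o - z i o)
              = (∑ i, w i) * C a o - ∑ i, w i * z i o := by
            rw [Finset.sum_mul, ← Finset.sum_sub_distrib]
            apply Finset.sum_congr rfl
            intro i _; ring
          rw [hq', this, hw1, one_mul]
        rw [h1]
        calc |∑ i, w i * (C a o - z i o)| ≤ ∑ i, |w i * (C a o - z i o)| :=
              Finset.abs_sum_le_sum_abs _ _
          _ = ∑ i, w i * |C a o - z i o| := by
              apply Finset.sum_congr rfl
              intro i _
              rw [abs_mul, abs_of_nonneg (hw0 i)]
      calc ∑ o, |C a o - q o| ≤ ∑ o, ∑ i, w i * |C a o - z i o| :=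
            Finset.sum_le_sum fun o _ => key o
        _ = ∑ i, w i * ∑ o, |C a o - z i o| := by
            rw [Finset.sum_comm]
            apply Finset.sum_congr rfl
            intro i _
            rw [Finset.mul_sum]
        _ ≤ ∑ i, w i * M := by
            apply Finset.sum_le_sum
            intro i _
            apply mul_le_mul_of_nonneg_left _ (hw0 i)
            obtain ⟨s, hs⟩ := hz i
            rw [← hs]
            exact Finset.le_sup' (fun s => ∑ o, |C a o - C s o|) (Finset.mem_univ s)
        _ = M := by rw [← Finset.sum_mul, hw1, one_mul]
    have hex : ∃ b' : S, b' ≠ a ∧ d ≤ ∑ o, |C a o - C b' o| := by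
      rcases eq_or_ne b a with hba | hba
      · have hM0 : M = 0 := by rw [hb, hba]; simp
        obtain ⟨b', hb'⟩ := Fintype.exists_ne_of_one_lt_card hS a
        refine ⟨b', hb', ?_⟩
        have : d ≤ 0 := hM0 ▸ hdM
        have : 0 ≤ ∑ o, |C a o - C b' o| := Finset.sum_nonneg fun o _ => abs_nonneg _
        linarith
      · exact ⟨b, hba, hb ▸ hdM⟩
    obtain ⟨b', hb'a, hdb⟩ := hex
    have hmem : (a, b') ∈ Finset.univ.filter (fun p : S × S => p.1 ≠ p.2) := by
      simp [hb'a.symm]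
    calc betaStar C hS ≤ betaL (pairPrior a b') C := Finset.inf'_le _ hmem
      _ = 1 - (∑ o, |C a o - C b' o|) / 2 := pair_beta hb'a.symm hC
      _ ≤ 1 - d / 2 := by linarith
end

section
/- Let O be a nonempty finite set, let ε ≥ 0, and let C be a channel with two secrets S = {1, 2} that is ε-LDP, i.e., C s o ≤ exp(ε) · C s' o for all s, s' ∈ S and o ∈ O. Then the advantage of the optimal adversary satisfies Adv(C) = (1/2) ∑_{o ∈ O} |C 1 o − C 2 o| ≤ (exp(ε) − 1) / (exp(ε) + 1); this bound is strictly tighter than the bound Adv(C) ≤ exp(ε) − 1 of Yeom et al. -/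
/-- A channel is `ε`-LDP if `C s o ≤ exp(ε) · C s' o` for all secrets `s, s'` and outputs `o`. -/
def IsLDP {S O : Type*} (ε : ℝ) (C : S → O → ℝ) : Prop :=
  ∀ s s' o, C s o ≤ Real.exp ε * C s' o

/-- for an `ε`-LDP channel with two secrets, the advantage of the optimal
adversary, `Adv(C) = (1/2) ∑_o |C 0 o − C 1 o|`, is at most `(exp ε − 1)/(exp ε + 1)`. -/
theorem advantage_ldp_bound {O : Type*} [Fintype O] [Nonempty O] (ε : ℝ) (hε : 0 ≤ ε)
    (C : Fin 2 → O → ℝ) (hC : IsChannel C) (hLDP : IsLDP ε C) :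
    (1 / 2) * ∑ o, |C 0 o - C 1 o| ≤ (Real.exp ε - 1) / (Real.exp ε + 1) := by
  obtain ⟨hnn, hsum⟩ := hC
  have hE : (1:ℝ) ≤ Real.exp ε := Real.one_le_exp hε
  have hpos : (0:ℝ) < Real.exp ε + 1 := by linarith
  have key : ∀ o, |C 0 o - C 1 o| ≤
      (Real.exp ε - 1) / (Real.exp ε + 1) * (C 0 o + C 1 o) := by
    intro o
    have h01 := hLDP 0 1 o
    have h10 := hLDP 1 0 o
    have h0 := hnn 0 o
    have h1 := hnn 1 o
    rw [div_mul_eq_mul_div, le_div_iff₀ hpos]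
    rcases abs_cases (C 0 o - C 1 o) with ⟨h, _⟩ | ⟨h, _⟩ <;> rw [h] <;> nlinarith
  calc (1 / 2) * ∑ o, |C 0 o - C 1 o|
      ≤ (1 / 2) * ∑ o, (Real.exp ε - 1) / (Real.exp ε + 1) * (C 0 o + C 1 o) := by
        gcongr with o _
        exact key o
    _ = (Real.exp ε - 1) / (Real.exp ε + 1) := by
        rw [← Finset.mul_sum, Finset.sum_add_distrib, hsum 0, hsum 1]
        ring
end

section
/- Let n ≥ 1 and v ≥ 2, let the secret space be the set X of databases x : Fin n → Fin v, and let O be a nonempty finite set. Let K be a channel from X to O that is ε-DP: for all databases x, x' differing in the value of exactly one coordinate and all o ∈ O, K x o ≤ exp(ε) · K x' o. Then for every prior π on X with G(π) > 0, β(π, K) ≥ (1 − (max_x π x) · (v · exp(ε) / (v − 1 + exp(ε)))^n) / (1 − max_x π x). -/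
/-- Two databases are adjacent if they differ in the value of exactly one record. -/
def Adjacent {n v : ℕ} (x x' : Fin n → Fin v) : Prop :=
  ∃ i, x i ≠ x' i ∧ ∀ j, j ≠ i → x j = x' j

/- Under ε-DP, changing one record scales each output probability by at most `r = exp ε`, so
each of the `v + 1` alternatives for a record carries at least `1/r` of the mass of the current
value. Induction on the records gives `K x o · (1 + (v + 1)/r)^(n+1) ≤ ∑_x K x o` for every
database `x`. Bounding `π x ≤ max π` and summing over `o` (each row of `K` sums to 1) yields
`∑_o max_x π x K x o ≤ max π · (v + 2)^(n+1) / (1 + (v + 1)/r)^(n+1)`, which is the claim. -/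

lemma adjacent_cons_of_ne {m v : ℕ} {a b : Fin v} (hab : a ≠ b) (y : Fin m → Fin v) :
    Adjacent (Fin.cons a y : Fin (m + 1) → Fin v) (Fin.cons b y) := by
  refine ⟨0, by simpa using hab, fun j hj => ?_⟩
  obtain ⟨k, rfl⟩ := Fin.exists_succ_eq.mpr hj
  simp

lemma Adjacent.cons {m v : ℕ} (a : Fin v) {y y' : Fin m → Fin v} (h : Adjacent y y') :
    Adjacent (Fin.cons a y : Fin (m + 1) → Fin v) (Fin.cons a y') := by
  obtain ⟨i, hi, hall⟩ := h
  refine ⟨i.succ, by simpa using hi, fun j => Fin.cases (fun _ => rfl) (fun k hk => ?_) j⟩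
  simpa using hall k (by simpa using hk)

lemma one_add_div_mul_le_sum {k : ℕ} {r : ℝ} (hr : 0 < r) (g : Fin (k + 1) → ℝ)
    (a : Fin (k + 1)) (hg : ∀ b, b ≠ a → g a ≤ r * g b) :
    (1 + k / r) * g a ≤ ∑ b, g b := by
  have hrest : (k : ℝ) * (g a / r) ≤ ∑ b ∈ Finset.univ.erase a, g b := by
    have h := Finset.card_nsmul_le_sum (Finset.univ.erase a) g (g a / r) fun b hb =>
      (div_le_iff₀' hr).mpr (hg b (Finset.ne_of_mem_erase hb))
    simpa [Finset.card_erase_of_mem] using h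
  rw [← Finset.add_sum_erase _ _ (Finset.mem_univ a)]
  calc (1 + k / r) * g a = g a + k * (g a / r) := by ring
    _ ≤ _ := by gcongr

lemma mul_pow_le_sum_of_adjacent {m k : ℕ} {r : ℝ} (hr : 0 < r)
    {f : (Fin m → Fin (k + 1)) → ℝ} (hf : ∀ x x', Adjacent x x' → f x ≤ r * f x')
    (x₀ : Fin m → Fin (k + 1)) :
    f x₀ * (1 + k / r) ^ m ≤ ∑ x, f x := by
  induction m with
  | zero => rw [Fintype.sum_subsingleton _ x₀, pow_zero, mul_one]
  | succ m ih =>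
    have hfiber : ∀ y, (1 + k / r) * f (Fin.cons (x₀ 0) y) ≤ ∑ b, f (Fin.cons b y) :=
      fun y => one_add_div_mul_le_sum hr (fun b => f (Fin.cons b y)) (x₀ 0)
        fun b hb => hf _ _ (adjacent_cons_of_ne (Ne.symm hb) y)
    have htail := ih (f := fun y => f (Fin.cons (x₀ 0) y))
      (fun y y' h => hf _ _ (h.cons _)) (Fin.tail x₀)
    calc f x₀ * (1 + k / r) ^ (m + 1)
        = (1 + k / r) * (f (Fin.cons (x₀ 0) (Fin.tail x₀)) * (1 + k / r) ^ m) := by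
          rw [Fin.cons_self_tail]; ring
      _ ≤ (1 + k / r) * ∑ y, f (Fin.cons (x₀ 0) y) := by gcongr
      _ ≤ ∑ y, ∑ b, f (Fin.cons b y) := by
          rw [Finset.mul_sum]; exact Finset.sum_le_sum fun y _ => hfiber y
      _ = ∑ x, f x := by
          rw [← (Fin.consEquiv fun _ : Fin (m + 1) => Fin (k + 1)).sum_comp f,
            Fintype.sum_prod_type, Finset.sum_comm]
          rfl

lemma one_sub_mul_card_div_le_bayesRisk {S O : Type*} [Fintype S] [Nonempty S] [Fintype O]
    {π : S → ℝ} (hπ : ∀ s, 0 ≤ π s) {C : S → O → ℝ} (hC : IsChannel C) {T : ℝ}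
    (hT : 0 < T) (hmass : ∀ s o, C s o * T ≤ ∑ s', C s' o) :
    1 - Finset.univ.sup' Finset.univ_nonempty π * Fintype.card S / T ≤ bayesRisk π C := by
  set M := Finset.univ.sup' Finset.univ_nonempty π
  have hM : 0 ≤ M := (hπ (Classical.arbitrary S)).trans (Finset.le_sup' π (Finset.mem_univ _))
  have hcol : ∀ o, Finset.univ.sup' Finset.univ_nonempty (fun s => π s * C s o)
      ≤ M / T * ∑ s, C s o := fun o =>
    Finset.sup'_le _ _ fun s _ => calc
      π s * C s o ≤ M * C s o := by
          gcongr
          · exact hC.1 s o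
          · exact Finset.le_sup' π (Finset.mem_univ s)
      _ ≤ M * ((∑ s', C s' o) / T) := by gcongr; exact (le_div_iff₀ hT).mpr (hmass s o)
      _ = M / T * ∑ s', C s' o := by ring
  have hsum : ∑ o, Finset.univ.sup' Finset.univ_nonempty (fun s => π s * C s o)
      ≤ M * Fintype.card S / T := calc
    _ ≤ ∑ o, M / T * ∑ s, C s o := Finset.sum_le_sum fun o _ => hcol o
    _ = M / T * ∑ s, ∑ o, C s o := by rw [← Finset.mul_sum, Finset.sum_comm]
    _ = M * Fintype.card S / T := by simp [hC.2]; ring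
  rw [bayesRisk]
  linarith

theorem dp_lower_bound_beta_general (n v : ℕ) (ε : ℝ) {O : Type*}
    [Fintype O]
    (K : (Fin (n + 1) → Fin (v + 2)) → O → ℝ) (hK : IsChannel K)
    (hDP : ∀ x x', Adjacent x x' → ∀ o, K x o ≤ Real.exp ε * K x' o)
    (π : (Fin (n + 1) → Fin (v + 2)) → ℝ) (hπ : IsPrior π) (hG : 0 < guessErr π) :
    (1 - (Finset.univ.sup' Finset.univ_nonempty π) *
          (((v : ℝ) + 2) * Real.exp ε / (((v : ℝ) + 2) - 1 + Real.exp ε)) ^ (n + 1)) /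
        (1 - Finset.univ.sup' Finset.univ_nonempty π)
      ≤ betaL π K := by
  have he := Real.exp_pos ε
  have hmass : ∀ x o,
      K x o * (1 + ((v + 1 : ℕ) : ℝ) / Real.exp ε) ^ (n + 1) ≤ ∑ x', K x' o :=
    fun x o => mul_pow_le_sum_of_adjacent he (fun x x' h => hDP x x' h o) x
  have hrisk := one_sub_mul_card_div_le_bayesRisk hπ.1 hK (by positivity) hmass
  have hconst : ((v : ℝ) + 2) * Real.exp ε / (((v : ℝ) + 2) - 1 + Real.exp ε)
      = ((v : ℝ) + 2) / (1 + ((v + 1 : ℕ) : ℝ) / Real.exp ε) := by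
    have hd : ((v : ℝ) + 2) - 1 + Real.exp ε ≠ 0 := by
      rw [add_sub_assoc]; positivity
    push_cast
    field_simp
    ring
  rw [hconst, div_pow, ← mul_div_assoc]
  rw [Fintype.card_fun, Fintype.card_fin, Fintype.card_fin] at hrisk
  push_cast at hrisk ⊢
  exact div_le_div_of_nonneg_right hrisk hG.le

/-- if a mechanism `K` on databases with `n + 1 ≥ 1` records over `v + 2 ≥ 2`
values is `ε`-DP, then for every prior `π` with `G(π) > 0`,
`β(π, K) ≥ (1 − (max_x π x)·(v·exp ε/(v − 1 + exp ε))^n) / (1 − max_x π x)`. -/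
theorem dp_lower_bound_beta (n v : ℕ) (ε : ℝ) (hε : 0 ≤ ε) {O : Type*}
    [Fintype O] [Nonempty O]
    (K : (Fin (n + 1) → Fin (v + 2)) → O → ℝ) (hK : IsChannel K)
    (hDP : ∀ x x', Adjacent x x' → ∀ o, K x o ≤ Real.exp ε * K x' o)
    (π : (Fin (n + 1) → Fin (v + 2)) → ℝ) (hπ : IsPrior π) (hG : 0 < guessErr π) :
    (1 - (Finset.univ.sup' Finset.univ_nonempty π) *
          (((v : ℝ) + 2) * Real.exp ε / (((v : ℝ) + 2) - 1 + Real.exp ε)) ^ (n + 1)) /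
        (1 - Finset.univ.sup' Finset.univ_nonempty π)
      ≤ betaL π K :=
  dp_lower_bound_beta_general n v ε K hK hDP π hπ hG
end

section
/- Let S and O be nonempty finite sets with n = |S| ≥ 2, let C be a channel from S to O, and let π be a prior on S with exactly k nonzero components (2 ≤ k ≤ n) such that β(π, C) = 0 (equivalently, R*(π, C) = 0 and G(π) > 0). Then for the uniform prior υ on S (υ s = 1/n for all s), one has β(υ, C) ≤ (1 − k/n) / (1 − 1/n). -/
open Finset

namespace Finset

variable {ι M : Type*} [AddCommMonoid M] [LinearOrder M] {s t : Finset ι} {f : ι → M}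

lemma sup'_le_sum_of_nonneg [IsOrderedAddMonoid M] (hs : s.Nonempty) (hf : ∀ i ∈ s, 0 ≤ f i) :
    s.sup' hs f ≤ ∑ i ∈ s, f i :=
  sup'_le _ _ fun _ hi => single_le_sum hf hi

lemma eq_of_sum_eq_sup' [IsOrderedCancelAddMonoid M] (hs : s.Nonempty) (hf : ∀ i ∈ s, 0 ≤ f i)
    (h : ∑ i ∈ s, f i = s.sup' hs f) {i j : ι} (hi : i ∈ s) (hj : j ∈ s)
    (hfi : 0 < f i) (hfj : 0 < f j) : i = j := by
  by_contra hij
  obtain ⟨m, hm, hfm⟩ := exists_mem_eq_sup' hs f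
  obtain ⟨x, hx, hxm, hfx⟩ : ∃ x ∈ s, m ≠ x ∧ 0 < f x := by
    by_cases hmi : m = i
    · exact ⟨j, hj, hmi ▸ hij, hfj⟩
    · exact ⟨i, hi, hmi, hfi⟩
  have := add_le_sum hf hm hx hxm
  have := lt_add_of_pos_right (f m) hfx
  order

lemma sum_le_sup'_of_pos_unique (hs : s.Nonempty) (hts : t ⊆ s) (hf : ∀ i ∈ s, 0 ≤ f i)
    (hpos : ∀ i ∈ t, ∀ j ∈ t, 0 < f i → 0 < f j → i = j) :
    ∑ i ∈ t, f i ≤ s.sup' hs f := by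
  by_cases h : ∃ i ∈ t, 0 < f i
  · obtain ⟨i, hi, hfi⟩ := h
    rw [sum_eq_single_of_mem i hi fun j hj hji =>
      (hf j (hts hj)).eq_or_lt.elim Eq.symm fun hfj => absurd (hpos j hj i hi hfj hfi) hji]
    exact le_sup' f (hts hi)
  · push Not at h
    obtain ⟨i, hi⟩ := hs
    rw [sum_eq_zero fun j hj => (h j hj).antisymm (hf j (hts hj))]
    exact (hf i hi).trans (le_sup' f hi)

end Finset

/-- The multiplicative Bayes capacity of `C`; for the uniform prior,
`R*(υ, C) = 1 - mulCapacity C / |S|`. -/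
noncomputable def mulCapacity {S O : Type*} [Fintype S] [Nonempty S] [Fintype O]
    (C : S → O → ℝ) : ℝ :=
  ∑ o, univ.sup' univ_nonempty fun s => C s o

section Channel

variable {S O : Type*} [Fintype S] [Fintype O] {C : S → O → ℝ} {π : S → ℝ}

lemma IsChannel.sum_sum_mul_eq_one (hC : IsChannel C) (hπ : IsPrior π) :
    ∑ o, ∑ s, π s * C s o = 1 := by
  rw [sum_comm, ← hπ.2]
  exact sum_congr rfl fun s _ => by rw [← mul_sum, hC.2 s, mul_one]

variable [Nonempty S]

lemma IsChannel.eq_of_bayesRisk_eq_zero (hC : IsChannel C) (hπ : IsPrior π)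
    (hR : bayesRisk π C = 0) (o : O) {s t : S} (hs : 0 < π s * C s o)
    (ht : 0 < π t * C t o) : s = t := by
  have hjoint : ∀ o, ∀ s ∈ univ, 0 ≤ π s * C s o := fun o s _ => mul_nonneg (hπ.1 s) (hC.1 s o)
  have hsum : ∑ o, univ.sup' univ_nonempty (fun s => π s * C s o) = ∑ o, ∑ s, π s * C s o := by
    rw [hC.sum_sum_mul_eq_one hπ]
    unfold bayesRisk at hR
    linarith
  have hmax := (sum_eq_sum_iff_of_le fun o _ => sup'_le_sum_of_nonneg _ (hjoint o)).1 hsum o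
    (mem_univ o)
  exact eq_of_sum_eq_sup' univ_nonempty (hjoint o) hmax.symm (mem_univ s) (mem_univ t) hs ht

lemma IsChannel.card_support_le_mulCapacity (hC : IsChannel C) (hπ : IsPrior π)
    (hR : bayesRisk π C = 0) : ((univ.filter fun s => 0 < π s).card : ℝ) ≤ mulCapacity C := by
  calc ((univ.filter fun s => 0 < π s).card : ℝ)
      = ∑ s ∈ univ.filter (fun s => 0 < π s), ∑ o, C s o := by simp [hC.2]
    _ = ∑ o, ∑ s ∈ univ.filter (fun s => 0 < π s), C s o := sum_comm
    _ ≤ mulCapacity C := sum_le_sum fun o _ =>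
      sum_le_sup'_of_pos_unique univ_nonempty (subset_univ _) (fun s _ => hC.1 s o)
        fun s hs t ht hCs hCt => hC.eq_of_bayesRisk_eq_zero hπ hR o
          (mul_pos (mem_filter.1 hs).2 hCs) (mul_pos (mem_filter.1 ht).2 hCt)

lemma bayesRisk_const {c : ℝ} (hc : 0 ≤ c) (C : S → O → ℝ) :
    bayesRisk (fun _ => c) C = 1 - c * mulCapacity C := by
  simp only [bayesRisk, mulCapacity, mul_sum, mul₀_sup' hc]

lemma guessErr_const (c : ℝ) : guessErr (fun _ : S => c) = 1 - c := by
  rw [guessErr, sup'_const]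

lemma betaL_const_le {c x : ℝ} (hc0 : 0 ≤ c) (hc1 : c ≤ 1) (hx : x ≤ mulCapacity C) :
    betaL (fun _ => c) C ≤ (1 - c * x) / (1 - c) := by
  rw [betaL, bayesRisk_const hc0, guessErr_const]
  gcongr

end Channel

theorem beta_uniform_upper_bound_general {S O : Type*} [Fintype S] [Nonempty S]
    [Fintype O]
    (n k : ℕ)
    (C : S → O → ℝ) (hC : IsChannel C)
    (π : S → ℝ) (hπ : IsPrior π)
    (hsupp : (Finset.univ.filter fun s => 0 < π s).card = k)
    (hβ : betaL π C = 0) (hG : 0 < guessErr π) :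
    betaL (fun _ => (1 : ℝ) / n) C ≤ (1 - (k : ℝ) / n) / (1 - 1 / n) := by
  have hR : bayesRisk π C = 0 := (div_eq_zero_iff.1 hβ).resolve_right hG.ne'
  have hk := hC.card_support_le_mulCapacity hπ hR
  rw [hsupp] at hk
  have hn : (1 : ℝ) / n ≤ 1 := by
    rw [one_div]
    exact Nat.cast_inv_le_one n
  calc betaL (fun _ => (1 : ℝ) / n) C ≤ (1 - 1 / n * k) / (1 - 1 / n) :=
        betaL_const_le (Nat.one_div_cast_nonneg n) hn hk
    _ = (1 - (k : ℝ) / n) / (1 - 1 / n) := by ring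

/-- if `β(π, C) = 0` for a prior `π` with exactly `k` nonzero components
(`2 ≤ k ≤ n`, `n = |S| ≥ 2`), then for the uniform prior `υ`,
`β(υ, C) ≤ (1 − k/n)/(1 − 1/n)`. -/
theorem beta_uniform_upper_bound {S O : Type*} [Fintype S] [Nonempty S]
    [Fintype O] [Nonempty O]
    (n k : ℕ) (hn : Fintype.card S = n) (hn2 : 2 ≤ n) (hk2 : 2 ≤ k) (hkn : k ≤ n)
    (C : S → O → ℝ) (hC : IsChannel C)
    (π : S → ℝ) (hπ : IsPrior π)
    (hsupp : (Finset.univ.filter fun s => 0 < π s).card = k)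
    (hβ : betaL π C = 0) (hG : 0 < guessErr π) :
    betaL (fun _ => (1 : ℝ) / n) C ≤ (1 - (k : ℝ) / n) / (1 - 1 / n) :=
  beta_uniform_upper_bound_general n k C hC π hπ hsupp hβ hG
end

section
/- Let S and O be nonempty finite sets, let C be a channel from S to O, and let π be a prior on S with R*(π, C) = 0. Let π' be the uniform prior on the support of π, i.e., π' s = 1/k for s in the support of π (where k is the cardinality of the support) and π' s = 0 otherwise. Then R*(π', C) = 0. -/
/-- if `R*(π, C) = 0`, then the Bayes risk of the uniform prior on the
support of `π` is also 0. -/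
theorem bayesRisk_zero_uniform_support {S O : Type*} [Fintype S] [Nonempty S]
    [Fintype O] [Nonempty O]
    (C : S → O → ℝ) (hC : IsChannel C) (π : S → ℝ) (hπ : IsPrior π)
    (h : bayesRisk π C = 0) :
    bayesRisk (fun s => if 0 < π s
      then (1 : ℝ) / ((Finset.univ.filter fun t => 0 < π t).card : ℝ) else 0) C = 0 := by
  classical
  obtain ⟨hCnn, hCrow⟩ := hC
  obtain ⟨hπnn, hπsum⟩ := hπ
  set T := Finset.univ.filter fun t => 0 < π t with hT
  have hTne : T.Nonempty := by
    by_contra hne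
    have hall : ∀ s, π s = 0 := by
      intro s
      rcases (hπnn s).lt_or_eq with hlt | he
      · exact absurd ⟨s, by simp [hT, hlt]⟩ hne
      · exact he.symm
    simp [hall] at hπsum
  have hk : (0:ℝ) < (T.card : ℝ) := by exact_mod_cast Finset.card_pos.mpr hTne
  set π' : S → ℝ := fun s => if 0 < π s then (1:ℝ)/(T.card:ℝ) else 0 with hπ'
  have hπ'nn : ∀ s, 0 ≤ π' s := by
    intro s; simp only [hπ']; split_ifs <;> positivity
  have hπ'sum : ∑ s, π' s = 1 := by
    simp only [hπ']
    rw [← Finset.sum_filter, ← hT, Finset.sum_const, nsmul_eq_mul]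
    field_simp
  have h1 : ∑ o, Finset.univ.sup' Finset.univ_nonempty (fun s => π s * C s o) = 1 := by
    unfold bayesRisk at h; linarith
  have hsum : ∑ o, ∑ s, π s * C s o = 1 := by
    rw [Finset.sum_comm]
    simp_rw [← Finset.mul_sum, hCrow, mul_one]
    exact hπsum
  have hle : ∀ o, Finset.univ.sup' Finset.univ_nonempty (fun s => π s * C s o)
      ≤ ∑ s, π s * C s o := by
    intro o
    apply Finset.sup'_le
    intro s _
    exact Finset.single_le_sum (fun t _ => mul_nonneg (hπnn t) (hCnn t o)) (Finset.mem_univ s)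
  have heq : ∀ o, Finset.univ.sup' Finset.univ_nonempty (fun s => π s * C s o)
      = ∑ s, π s * C s o := by
    intro o
    by_contra hne
    have hlt : Finset.univ.sup' Finset.univ_nonempty (fun s => π s * C s o)
        < ∑ s, π s * C s o := lt_of_le_of_ne (hle o) hne
    have : ∑ o, Finset.univ.sup' Finset.univ_nonempty (fun s => π s * C s o)
        < ∑ o, ∑ s, π s * C s o :=
      Finset.sum_lt_sum (fun o _ => hle o) ⟨o, Finset.mem_univ o, hlt⟩
    rw [h1, hsum] at this
    exact lt_irrefl 1 this
  -- for each o, pick the maximizer s*; all other terms vanish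
  have key : ∀ o : O, ∃ s' : S, ∀ s, s ≠ s' → π s * C s o = 0 := by
    intro o
    obtain ⟨s', -, hs'⟩ := Finset.exists_mem_eq_sup' (Finset.univ_nonempty (α := S))
      (fun s => π s * C s o)
    refine ⟨s', fun s hs => ?_⟩
    have hzero : ∑ t ∈ Finset.univ.erase s', π t * C t o = 0 := by
      have := Finset.add_sum_erase Finset.univ (fun t => π t * C t o) (Finset.mem_univ s')
      have h2 := heq o
      rw [hs'] at h2
      beta_reduce at this
      linarith
    have := (Finset.sum_eq_zero_iff_of_nonneg
      (fun t _ => mul_nonneg (hπnn t) (hCnn t o))).mp hzero s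
      (Finset.mem_erase.mpr ⟨hs, Finset.mem_univ s⟩)
    exact this
  have heq' : ∀ o, Finset.univ.sup' Finset.univ_nonempty (fun s => π' s * C s o)
      = ∑ s, π' s * C s o := by
    intro o
    obtain ⟨s', hs'⟩ := key o
    have hz : ∀ s, s ≠ s' → π' s * C s o = 0 := by
      intro s hs
      simp only [hπ']
      split_ifs with hpos
      · have h0 := hs' s hs
        have : C s o = 0 := by
          rcases mul_eq_zero.mp h0 with h | h
          · exact absurd h (ne_of_gt hpos)
          · exact h
        simp [this]
      · simp
    apply le_antisymm
    · apply Finset.sup'_le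
      intro s _
      exact Finset.single_le_sum (fun t _ => mul_nonneg (hπ'nn t) (hCnn t o)) (Finset.mem_univ s)
    · rw [Finset.sum_eq_single s' (fun b _ hb => hz b hb) (fun hb => absurd (Finset.mem_univ s') hb)]
      exact Finset.le_sup' (fun s => π' s * C s o) (Finset.mem_univ s')
  have hfin : ∑ o, Finset.univ.sup' Finset.univ_nonempty (fun s => π' s * C s o) = 1 := by
    simp_rw [heq']
    rw [Finset.sum_comm]
    simp_rw [← Finset.mul_sum, hCrow, mul_one]
    exact hπ'sum
  unfold bayesRisk
  rw [show (fun s => if 0 < π s then (1:ℝ)/(T.card:ℝ) else 0) = π' from rfl] at *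
  rw [hfin]
  ring
end

section
/- Let V be a real vector space, let S ⊆ V be a convex set, let f : V → ℝ be nonnegative on S and concave on S, and let g : V → ℝ be nonnegative on S, positive on at least one element of S, and convexly generated by a finite set S' ⊆ S, meaning: for every v ∈ S there exist a finite subset S'' ⊆ S' and convex coefficients (c_u)_{u ∈ S''} (c_u ≥ 0, ∑_{u ∈ S''} c_u = 1) such that v = ∑_{u ∈ S''} c_u · u and g(v) = ∑_{u ∈ S''} c_u · g(u). Then there exists u ∈ S' with g(u) > 0 such that f(u)/g(u) ≤ f(v)/g(v) for every v ∈ S with g(v) > 0; i.e., the minimum of f/g over {v ∈ S : g(v) > 0} exists and is attained at a point of S'. -/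
/-- if `f` is nonnegative and concave on a convex set `S`, and `g` is
nonnegative on `S`, positive somewhere on `S`, and convexly generated by a finite set
`S' ⊆ S`, then the minimum of `f/g` over `{v ∈ S : g v > 0}` exists and is attained at a
point of `S'`. -/
theorem min_of_ratio_at_corner_points {V : Type*} [AddCommGroup V] [Module ℝ V]
    (S : Set V) (hSconv : Convex ℝ S)
    (f g : V → ℝ)
    (hf0 : ∀ v ∈ S, 0 ≤ f v) (hfconc : ConcaveOn ℝ S f)
    (hg0 : ∀ v ∈ S, 0 ≤ g v) (hgpos : ∃ v ∈ S, 0 < g v)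
    (S' : Finset V) (hS'sub : ↑S' ⊆ S)
    (hgen : ∀ v ∈ S, ∃ c : V → ℝ,
      (∀ u ∈ S', 0 ≤ c u) ∧ ∑ u ∈ S', c u = 1 ∧
      v = ∑ u ∈ S', c u • u ∧ g v = ∑ u ∈ S', c u * g u) :
    ∃ u ∈ S', 0 < g u ∧ ∀ v ∈ S, 0 < g v → f u / g u ≤ f v / g v := by
  classical
  set T : Finset V := S'.filter (fun u => 0 < g u) with hT
  have hTne : T.Nonempty := by
    obtain ⟨v, hvS, hvpos⟩ := hgpos
    obtain ⟨c, hc0, hc1, -, hgv⟩ := hgen v hvS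
    by_contra h
    rw [Finset.not_nonempty_iff_eq_empty, hT, Finset.filter_eq_empty_iff] at h
    have : g v ≤ 0 := by
      rw [hgv]
      apply Finset.sum_nonpos
      intro u hu
      have : g u = 0 := le_antisymm (not_lt.mp (h hu)) (hg0 u (hS'sub hu))
      simp [this]
    linarith
  obtain ⟨u₀, hu₀T, hu₀min⟩ := T.exists_min_image (fun u => f u / g u) hTne
  rw [hT, Finset.mem_filter] at hu₀T
  obtain ⟨hu₀S', hu₀pos⟩ := hu₀T
  refine ⟨u₀, hu₀S', hu₀pos, ?_⟩
  set m := f u₀ / g u₀ with hm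
  have hm0 : 0 ≤ m := div_nonneg (hf0 u₀ (hS'sub hu₀S')) (le_of_lt hu₀pos)
  have hkey : ∀ u ∈ S', m * g u ≤ f u := by
    intro u huS'
    by_cases hgu : 0 < g u
    · have hum : m ≤ f u / g u := hu₀min u (by rw [hT, Finset.mem_filter]; exact ⟨huS', hgu⟩)
      calc m * g u ≤ (f u / g u) * g u := by nlinarith
        _ = f u := by field_simp
    · have : g u = 0 := le_antisymm (not_lt.mp hgu) (hg0 u (hS'sub huS'))
      rw [this]
      simpa using hf0 u (hS'sub huS')
  intro v hvS hvpos
  obtain ⟨c, hc0, hc1, hveq, hgv⟩ := hgen v hvS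
  have hconc : ∑ u ∈ S', c u • f u ≤ f (∑ u ∈ S', c u • u) :=
    hfconc.le_map_sum hc0 hc1 (fun u hu => hS'sub hu)
  have hfv : m * g v ≤ f v := by
    rw [hgv, hveq]
    calc m * ∑ u ∈ S', c u * g u = ∑ u ∈ S', c u * (m * g u) := by
          rw [Finset.mul_sum]; congr 1; ext u; ring
      _ ≤ ∑ u ∈ S', c u * f u := by
          apply Finset.sum_le_sum
          intro u hu
          exact mul_le_mul_of_nonneg_left (hkey u hu) (hc0 u hu)
      _ ≤ f (∑ u ∈ S', c u • u) := hconc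
  rw [hm] at hfv ⊢
  rw [div_le_div_iff₀ hu₀pos hvpos]
  have h2 := mul_le_mul_of_nonneg_right hfv (le_of_lt hu₀pos)
  have h3 : f u₀ / g u₀ * g v * g u₀ = f u₀ * g v := by field_simp
  linarith [h2, h3.symm ▸ h2]
end

section
/- Let n ≥ 2, ε ≥ 0, and let R be the Randomized Response channel on a secret set S with |S| = n and output set O = S, defined by R s o = exp(ε)/(n + exp(ε) − 1) if o = s and R s o = 1/(n + exp(ε) − 1) otherwise. Then the Bayes security of Randomized Response is β*(R) = n / (exp(ε) + n − 1); moreover β(π_{ab}, R) = n / (exp(ε) + n − 1) for every pair of distinct secrets a, b ∈ S. -/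
lemma sup'_eq_of_forall_le {S : Type*} [Fintype S] [Nonempty S] (f : S → ℝ) (x : S)
    (h : ∀ s, f s ≤ f x) : Finset.univ.sup' Finset.univ_nonempty f = f x :=
  le_antisymm (Finset.sup'_le _ _ fun s _ => h s) (Finset.le_sup' f (Finset.mem_univ x))

lemma rr_pair_beta {S : Type*} [Fintype S] [Nonempty S] [DecidableEq S]
    (n : ℕ) (hn : 2 ≤ n) (hcard : Fintype.card S = n) (ε : ℝ) (hε : 0 ≤ ε)
    (a b : S) (hab : a ≠ b) :
    betaL (pairPrior a b)
        (fun s o : S => if o = s then Real.exp ε / ((n : ℝ) + Real.exp ε - 1)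
          else 1 / ((n : ℝ) + Real.exp ε - 1))
      = (n : ℝ) / (Real.exp ε + (n : ℝ) - 1) := by
  set e := Real.exp ε with he
  have he1 : 1 ≤ e := Real.one_le_exp hε
  have hn2 : (2 : ℝ) ≤ (n : ℝ) := by exact_mod_cast hn
  set D : ℝ := (n : ℝ) + e - 1 with hD
  have hDpos : 0 < D := by simp only [hD]; linarith
  have hguess : guessErr (pairPrior a b) = 1 / 2 := by
    unfold guessErr
    rw [sup'_eq_of_forall_le (pairPrior a b) a (by
      intro s; unfold pairPrior; split_ifs <;> simp_all <;> norm_num)]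
    norm_num [pairPrior]
  have hsup : ∀ o : S,
      Finset.univ.sup' Finset.univ_nonempty
        (fun s => pairPrior a b s *
          (if o = s then e / D else 1 / D))
      = if o = a ∨ o = b then (1/2) * (e / D) else (1/2) * (1 / D) := by
    intro o
    have h1e : 1 / D ≤ e / D := by gcongr
    have h0 : (0:ℝ) ≤ 1 / D := by positivity
    have h0e : (0:ℝ) ≤ e / D := by positivity
    by_cases hoa : o = a
    · rw [sup'_eq_of_forall_le _ a]
      · simp [pairPrior, hoa]
      · intro s
        unfold pairPrior
        by_cases hsa : s = a <;> by_cases hsb : s = b <;>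
          simp_all <;> nlinarith
    · by_cases hob : o = b
      · rw [sup'_eq_of_forall_le _ b]
        · simp [pairPrior, hob, hab.symm]
        · intro s
          unfold pairPrior
          by_cases hsa : s = a <;> by_cases hsb : s = b <;>
            simp_all <;> nlinarith
      · rw [sup'_eq_of_forall_le _ a]
        · simp [pairPrior, hoa, hob, Ne.symm hoa]
        · intro s
          unfold pairPrior
          by_cases hsa : s = a <;> by_cases hsb : s = b <;>
            simp_all <;> nlinarith
  have hsum : ∑ o : S, (if o = a ∨ o = b then (1/2) * (e / D) else (1/2) * (1 / D))
      = (n : ℝ) * ((1/2) * (1 / D)) + 2 * ((1/2) * (e / D) - (1/2) * (1 / D)) := by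
    have key : ∀ o : S, (if o = a ∨ o = b then (1/2) * (e / D) else (1/2) * (1 / D))
        = (1/2) * (1 / D) + ((if o = a then (1/2) * (e / D) - (1/2) * (1 / D) else 0)
          + (if o = b then (1/2) * (e / D) - (1/2) * (1 / D) else 0)) := by
      intro o
      by_cases hoa : o = a <;> by_cases hob : o = b <;> simp_all <;> ring
    rw [Finset.sum_congr rfl (fun o _ => key o), Finset.sum_add_distrib,
      Finset.sum_add_distrib, Finset.sum_const, Finset.sum_ite_eq' Finset.univ a,
      Finset.sum_ite_eq' Finset.univ b]
    simp [hcard]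
    ring
  have hrisk : bayesRisk (pairPrior a b)
      (fun s o : S => if o = s then e / D else 1 / D)
      = 1 - ((n : ℝ) * ((1/2) * (1 / D)) + 2 * ((1/2) * (e / D) - (1/2) * (1 / D))) := by
    unfold bayesRisk
    rw [Finset.sum_congr rfl (fun o _ => hsup o), hsum]
  unfold betaL
  rw [hrisk, hguess]
  have hD0 : D ≠ 0 := ne_of_gt hDpos
  have hD' : Real.exp ε + (n:ℝ) - 1 = D := by rw [hD, he]; ring
  rw [hD']
  field_simp
  ring


set_option maxHeartbeats 1000000 in
/-- the Bayes security of the Randomized Response channel on `n ≥ 2` secrets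
(with output set equal to the secret set) is `n / (exp ε + n − 1)`; moreover
`β(π_{ab}, R) = n / (exp ε + n − 1)` for every pair of distinct secrets `a ≠ b`. -/
theorem randomizedResponse_bayes_security {S : Type*} [Fintype S] [Nonempty S] [DecidableEq S]
    (n : ℕ) (hn : 2 ≤ n) (hcard : Fintype.card S = n) (ε : ℝ) (hε : 0 ≤ ε) :
    betaStar (fun s o : S => if o = s then Real.exp ε / ((n : ℝ) + Real.exp ε - 1)
        else 1 / ((n : ℝ) + Real.exp ε - 1)) (by omega)
      = (n : ℝ) / (Real.exp ε + (n : ℝ) - 1) ∧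
    ∀ a b : S, a ≠ b →
      betaL (pairPrior a b)
          (fun s o : S => if o = s then Real.exp ε / ((n : ℝ) + Real.exp ε - 1)
            else 1 / ((n : ℝ) + Real.exp ε - 1))
        = (n : ℝ) / (Real.exp ε + (n : ℝ) - 1) := by
  constructor
  · unfold betaStar
    apply le_antisymm
    · obtain ⟨a, b, hab⟩ := Fintype.exists_pair_of_one_lt_card (by omega : 1 < Fintype.card S)
      have hmem : (a, b) ∈ (Finset.univ.filter (fun p : S × S => p.1 ≠ p.2)) := by
        simp [hab]
      refine le_trans (Finset.inf'_le _ hmem) ?_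
      rw [rr_pair_beta n hn hcard ε hε a b hab]
    · apply Finset.le_inf'
      intro p hp
      simp only [Finset.mem_filter, Finset.mem_univ, true_and] at hp
      rw [rr_pair_beta n hn hcard ε hε p.1 p.2 hp]
  · intro a b hab
    exact rr_pair_beta n hn hcard ε hε a b hab
end
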